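/- Let a ≥ 2 and b ≥ 1 be integers, and let K be a colored regularity graph such that there is no colored homomorphism from K_a + E_b (the disjoint union of a complete graph on a vertices and an edgeless graph on b vertices) into K. Then f_K((a−1)/(a+b−1)) ≥ 1/(a+b−1). -/

import Mathlib

/-- The three possible colors of an edge of a colored regularity graph. -/
inductive EColor : Type
  | white
  | gray
  | black
deriving DecidableEq

/-- A colored regularity graph (CRG): a finite nonempty vertex set (here `Fin n`),
each vertex colored white (`vcol i = false`) or black (`vcol i = true`), and each
unordered pair of distinct vertices colored white, gray or black. -/
structure CRG : Type where
  n : ℕ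
  npos : 0 < n
  vcol : Fin n → Bool
  ecol : Fin n → Fin n → EColor
  ecol_symm : ∀ i j, ecol i j = ecol j i

namespace CRG

/-- The function `f_K(p) = (1/k²)[p(|VW| + 2|EW|) + (1-p)(|VB| + 2|EB|)]`; the
counts over ordered pairs of distinct vertices give `2|EW|` and `2|EB|`. -/
noncomputable def fK (K : CRG) (p : ℝ) : ℝ :=
  (1 / (K.n : ℝ) ^ 2) *
    (p * (((Finset.univ.filter (fun i : Fin K.n => K.vcol i = false)).card : ℝ)
        + ((Finset.univ.filter (fun ij : Fin K.n × Fin K.n =>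
            ij.1 ≠ ij.2 ∧ K.ecol ij.1 ij.2 = EColor.white)).card : ℝ))
   + (1 - p) * (((Finset.univ.filter (fun i : Fin K.n => K.vcol i = true)).card : ℝ)
        + ((Finset.univ.filter (fun ij : Fin K.n × Fin K.n =>
            ij.1 ≠ ij.2 ∧ K.ecol ij.1 ij.2 = EColor.black)).card : ℝ)))

/-- The matrix `M_K(p)`. -/
noncomputable def M (K : CRG) (p : ℝ) : Matrix (Fin K.n) (Fin K.n) ℝ :=
  Matrix.of fun i j =>
    if i = j then (if K.vcol i then 1 - p else p)
    else
      match K.ecol i j with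
      | EColor.white => p
      | EColor.gray => 0
      | EColor.black => 1 - p

/-- The function `g_K(p)`: the minimum (here: infimum, which is attained) of the
quadratic form `uᵀ M_K(p) u` over the standard simplex. -/
noncomputable def gK (K : CRG) (p : ℝ) : ℝ :=
  sInf { x : ℝ | ∃ u : Fin K.n → ℝ, (∀ i, 0 ≤ u i) ∧ (∑ i, u i) = 1 ∧
    x = ∑ i, ∑ j, u i * K.M p i j * u j }

end CRG

/-- A colored homomorphism from a simple graph `F` to a CRG `K`. -/
def CHom {V : Type} (F : SimpleGraph V) (K : CRG) : Prop :=
  ∃ φ : V → Fin K.n,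
    (∀ u v : V, F.Adj u v →
      (φ u = φ v ∧ K.vcol (φ u) = true) ∨
      (φ u ≠ φ v ∧ K.ecol (φ u) (φ v) ≠ EColor.white)) ∧
    (∀ u v : V, u ≠ v → ¬ F.Adj u v →
      (φ u = φ v ∧ K.vcol (φ u) = false) ∨
      (φ u ≠ φ v ∧ K.ecol (φ u) (φ v) ≠ EColor.black))

/-- `K_a + E_b`: the disjoint union of a complete graph on `a` vertices and an
edgeless graph on `b` vertices. -/
def cliquePlusEmpty (a b : ℕ) : SimpleGraph (Fin a ⊕ Fin b) where
  Adj x y := x ≠ y ∧ x.isLeft ∧ y.isLeft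
  symm := by
    refine ⟨?_⟩
    intro x y h
    exact ⟨h.1.symm, h.2.2, h.2.1⟩
  loopless := by
    refine ⟨?_⟩
    intro x h
    exact h.1 rfl

/-! With `r = a + b - 1`, `p = (a - 1) / r` and `J` the all-ones matrix, `A = r • M_K(p) - J` has
entries `a - 2`, `-1`, `b - 1` at white, gray and black vertices and edges, and `f_K(p) ≥ 1 / r`
says that the quadratic form of `A` is nonnegative at the all-ones vector. We show that it is
nonnegative on the whole nonnegative orthant. If two distinct support points `i`, `j` of `u` have
`(eᵢ - eⱼ)ᵀ A (eᵢ - eⱼ) ≤ 0`, the form is concave along `eᵢ - eⱼ`, so moving all the weight of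
one of them onto the other does not increase it and shrinks the support. Otherwise, since
`K_a + E_b` does not map into `K`, the support consists of white vertices spanning no white edge,
each with at most `a - 2` gray neighbours among them, and at most `b` black vertices spanning no
black edge, every white-black pair being black. The white block is then nonnegative by AM-GM,
the black block by Cauchy-Schwarz, and the mixed blocks trivially. -/

open Finset Matrix Function

theorem Matrix.dotProduct_mulVec_self_eq_sum_sum {ι : Type*} [Fintype ι] (A : Matrix ι ι ℝ)
    {u : ι → ℝ} {s : Finset ι} (hs : ∀ i ∉ s, u i = 0) :
    u ⬝ᵥ A *ᵥ u = ∑ i ∈ s, ∑ j ∈ s, u i * A i j * u j := by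
  simp only [dotProduct, mulVec, mul_sum, ← mul_assoc]
  rw [← sum_subset (subset_univ s) fun i _ hi => by simp [hs i hi]]
  exact sum_congr rfl fun i _ =>
    (sum_subset (subset_univ s) fun j _ hj => by simp [hs j hj]).symm

/-- `(eᵢ - eⱼ)ᵀ A (eᵢ - eⱼ) > 0` for all distinct `i`, `j` in the support of `u`. -/
def Matrix.PosOnSupportDiffs {ι : Type*} (A : Matrix ι ι ℝ) (u : ι → ℝ) : Prop :=
  ∀ i j, i ≠ j → u i ≠ 0 → u j ≠ 0 → 2 * A i j < A i i + A j j

namespace Matrix.IsSymm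

variable {ι : Type*} [Fintype ι] [DecidableEq ι] {A : Matrix ι ι ℝ}

theorem quadForm_add_smul_single_sub_single (hA : A.IsSymm) (u : ι → ℝ) (i j : ι) (t : ℝ) :
    (u + t • (Pi.single i 1 - Pi.single j 1)) ⬝ᵥ A *ᵥ (u + t • (Pi.single i 1 - Pi.single j 1)) =
      u ⬝ᵥ A *ᵥ u + 2 * t * ((A *ᵥ u) i - (A *ᵥ u) j) + t ^ 2 * (A i i + A j j - 2 * A i j) := by
  have hcol : ∀ x, u ⬝ᵥ A.col x = (A *ᵥ u) x := fun x => by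
    simp only [dotProduct, mulVec, col_apply, hA.apply, mul_comm]
  simp only [mulVec_add, mulVec_smul, mulVec_sub, add_dotProduct, dotProduct_add, smul_dotProduct,
    dotProduct_smul, sub_dotProduct, dotProduct_sub, single_dotProduct, mulVec_single_one, hcol]
  simp [hA.apply i j]
  ring

theorem exists_support_ssubset_quadForm_le (hA : A.IsSymm) {u : ι → ℝ} (hu : 0 ≤ u) {i j : ι}
    (hij : i ≠ j) (hi : u i ≠ 0) (hj : u j ≠ 0) (hA_ij : A i i + A j j ≤ 2 * A i j)
    (hAu : (A *ᵥ u) i ≤ (A *ᵥ u) j) :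
    ∃ v, 0 ≤ v ∧ support v ⊂ support u ∧ v ⬝ᵥ A *ᵥ v ≤ u ⬝ᵥ A *ᵥ u := by
  set v := u + u j • (Pi.single i 1 - Pi.single j 1) with hv
  have hv_apply : ∀ k, v k = if k = i then u i + u j else if k = j then 0 else u k := by
    intro k
    rcases eq_or_ne k i with rfl | hki
    · simp [hv, hij]
    rcases eq_or_ne k j with rfl | hkj
    · simp [hv, hki]
    · simp [hv, hki, hkj]
  refine ⟨v, fun k => ?_, ?_, ?_⟩
  · rw [hv_apply]
    split_ifs
    exacts [add_nonneg (hu i) (hu j), le_rfl, hu k]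
  · rw [Set.ssubset_iff_of_subset]
    · exact ⟨j, hj, by simp [hv_apply, hij.symm]⟩
    · intro k hk
      rw [mem_support, hv_apply] at hk
      split_ifs at hk with hki hkj
      · exact hki ▸ hi
      · exact absurd rfl hk
      · exact hk
  · rw [hv, hA.quadForm_add_smul_single_sub_single]
    have huj : 0 ≤ u j := hu j
    nlinarith [mul_nonneg huj (sub_nonneg.2 hAu), mul_nonneg (sq_nonneg (u j)) (sub_nonneg.2 hA_ij)]

theorem quadForm_nonneg_of_posOnSupportDiffs (hA : A.IsSymm)
    (h : ∀ u : ι → ℝ, 0 ≤ u → A.PosOnSupportDiffs u → 0 ≤ u ⬝ᵥ A *ᵥ u)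
    {u : ι → ℝ} (hu : 0 ≤ u) : 0 ≤ u ⬝ᵥ A *ᵥ u := by
  induction hn : (support u).ncard using Nat.strong_induction_on generalizing u with
  | _ n ih =>
    by_cases hpos : A.PosOnSupportDiffs u
    · exact h u hu hpos
    obtain ⟨i, j, hij, hi, hj, hA_ij⟩ : ∃ i j, i ≠ j ∧ u i ≠ 0 ∧ u j ≠ 0 ∧
        A i i + A j j ≤ 2 * A i j := by
      simpa [PosOnSupportDiffs] using hpos
    obtain ⟨v, hv, hvu, hle⟩ :
        ∃ v, 0 ≤ v ∧ support v ⊂ support u ∧ v ⬝ᵥ A *ᵥ v ≤ u ⬝ᵥ A *ᵥ u := by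
      rcases le_total ((A *ᵥ u) i) ((A *ᵥ u) j) with hAu | hAu
      · exact hA.exists_support_ssubset_quadForm_le hu hij hi hj hA_ij hAu
      · exact hA.exists_support_ssubset_quadForm_le hu hij.symm hj hi
          (by linarith [hA.apply i j]) hAu
    exact (ih _ (hn ▸ Set.ncard_lt_ncard hvu) hv rfl).trans hle

end Matrix.IsSymm

theorem Finset.sum_sum_filter_mul_le_mul_sum_sq {ι : Type*} (s : Finset ι) {r : ι → ι → Prop}
    [DecidableRel r] (hr : ∀ i j, r i j → r j i) {d : ℝ} (hd : ∀ i ∈ s, (#{j ∈ s | r i j} : ℝ) ≤ d)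
    (u : ι → ℝ) : ∑ i ∈ s, ∑ j ∈ s with r i j, u i * u j ≤ d * ∑ i ∈ s, u i ^ 2 := by
  have hswap : ∑ i ∈ s, ∑ j ∈ s with r i j, u j ^ 2 = ∑ i ∈ s, ∑ j ∈ s with r i j, u i ^ 2 := by
    simp only [sum_filter]
    rw [sum_comm]
    refine sum_congr rfl fun i _ => sum_congr rfl fun j _ => ?_
    simp only [show r j i ↔ r i j from ⟨hr j i, hr i j⟩]
  calc ∑ i ∈ s, ∑ j ∈ s with r i j, u i * u j
      ≤ ∑ i ∈ s, ∑ j ∈ s with r i j, (u i ^ 2 + u j ^ 2) / 2 := by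
        gcongr with i _ j _
        linarith [two_mul_le_add_sq (u i) (u j)]
    _ = ∑ i ∈ s, #{j ∈ s | r i j} * u i ^ 2 := by
        simp only [add_div, sum_add_distrib, ← sum_div, hswap, sum_const, nsmul_eq_mul]
        ring
    _ ≤ d * ∑ i ∈ s, u i ^ 2 := by
        rw [mul_sum]
        gcongr with i hi
        exact hd i hi

def EColor.weight (w g k : ℝ) : EColor → ℝ
  | .white => w
  | .gray => g
  | .black => k

namespace CRG

variable (K : CRG)

def colorMatrix (w g k : ℝ) : Matrix (Fin K.n) (Fin K.n) ℝ :=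
  of fun i j => if i = j then (if K.vcol i then k else w) else (K.ecol i j).weight w g k

def AdmitsEdge (x y : Fin K.n) : Prop :=
  (x = y ∧ K.vcol x = true) ∨ (x ≠ y ∧ K.ecol x y ≠ .white)

def AdmitsNonEdge (x y : Fin K.n) : Prop :=
  (x = y ∧ K.vcol x = false) ∨ (x ≠ y ∧ K.ecol x y ≠ .black)

variable {K}

section ColorMatrix

@[simp]
theorem colorMatrix_apply_self (w g k : ℝ) (i : Fin K.n) :
    K.colorMatrix w g k i i = if K.vcol i then k else w := by
  simp [colorMatrix]

theorem colorMatrix_apply_of_ne {i j : Fin K.n} (h : i ≠ j) (w g k : ℝ) :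
    K.colorMatrix w g k i j = (K.ecol i j).weight w g k := by
  simp [colorMatrix, h]

theorem colorMatrix_isSymm (w g k : ℝ) : (K.colorMatrix w g k).IsSymm :=
  IsSymm.ext fun i j => by
    rcases eq_or_ne i j with rfl | h
    · rfl
    · rw [colorMatrix_apply_of_ne h, colorMatrix_apply_of_ne h.symm, K.ecol_symm]

theorem M_eq_colorMatrix (p : ℝ) : K.M p = K.colorMatrix p 0 (1 - p) := rfl

theorem colorMatrix_apply_affine {w g k w' g' k' : ℝ} (c d : ℝ) (hw : w' = c * w + d)
    (hg : g' = c * g + d) (hk : k' = c * k + d) (i j : Fin K.n) :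
    K.colorMatrix w' g' k' i j = c * K.colorMatrix w g k i j + d := by
  subst hw hg hk
  rcases eq_or_ne i j with rfl | h
  · cases hv : K.vcol i <;> simp [hv]
  · rw [colorMatrix_apply_of_ne h, colorMatrix_apply_of_ne h]
    cases K.ecol i j <;> rfl

theorem colorMatrix_add_eq_two_mul_of_white {w g k : ℝ} {i j : Fin K.n} (hij : i ≠ j)
    (hi : K.vcol i = false) (hj : K.vcol j = false) (he : K.ecol i j = .white) :
    K.colorMatrix w g k i i + K.colorMatrix w g k j j = 2 * K.colorMatrix w g k i j := by
  simp [colorMatrix_apply_of_ne hij, hi, hj, he, EColor.weight]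
  ring

theorem colorMatrix_add_eq_two_mul_of_black {w g k : ℝ} {i j : Fin K.n} (hij : i ≠ j)
    (hi : K.vcol i = true) (hj : K.vcol j = true) (he : K.ecol i j = .black) :
    K.colorMatrix w g k i i + K.colorMatrix w g k j j = 2 * K.colorMatrix w g k i j := by
  simp [colorMatrix_apply_of_ne hij, hi, hj, he, EColor.weight]
  ring

theorem fK_eq_sum_M (p : ℝ) : K.fK p = (∑ i, ∑ j, K.M p i j) / K.n ^ 2 := by
  have hM : ∀ i j, K.M p i j = p * ((if i = j ∧ K.vcol i = false then 1 else 0)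
        + (if i ≠ j ∧ K.ecol i j = .white then 1 else 0))
      + (1 - p) * ((if i = j ∧ K.vcol i = true then 1 else 0)
        + (if i ≠ j ∧ K.ecol i j = .black then 1 else 0)) := by
    intro i j
    rcases eq_or_ne i j with rfl | h
    · cases hv : K.vcol i <;> simp [M, hv]
    · cases he : K.ecol i j <;> simp [M, h, he]
  simp only [hM, sum_add_distrib, ← mul_sum, fK, card_filter, Fintype.sum_prod_type]
  simp [ite_and]
  ring

end ColorMatrix

section Blocks

variable {w k : ℝ} {s t : Finset (Fin K.n)} {u : Fin K.n → ℝ}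

theorem sum_sum_mul_colorMatrix_nonneg_of_white (hk : 0 ≤ k)
    (hs : ∀ i ∈ s, K.vcol i = false) (hs_pair : ∀ i ∈ s, ∀ j ∈ s, i ≠ j → K.ecol i j ≠ .white)
    (hdeg : ∀ i ∈ s, (#{j ∈ s | i ≠ j ∧ K.ecol i j = .gray} : ℝ) ≤ w) (hu : 0 ≤ u) :
    0 ≤ ∑ i ∈ s, ∑ j ∈ s, u i * K.colorMatrix w (-1) k i j * u j := by
  have hterm : ∀ i ∈ s, ∀ j ∈ s, (if i = j then w * u i ^ 2 else 0)
      - (if i ≠ j ∧ K.ecol i j = .gray then u i * u j else 0)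
      ≤ u i * K.colorMatrix w (-1) k i j * u j := by
    intro i hi j hj
    rcases eq_or_ne i j with rfl | hij
    · simp only [colorMatrix_apply_self, hs i hi]
      exact le_of_eq (by simp; ring)
    · rw [colorMatrix_apply_of_ne hij]
      cases he : K.ecol i j
      · exact absurd he (hs_pair i hi j hj hij)
      · simp [hij, EColor.weight]
      · simpa [hij, EColor.weight, mul_right_comm _ k] using
          mul_nonneg (mul_nonneg (hu i) (hu j)) hk
  calc (0 : ℝ)
      ≤ w * ∑ i ∈ s, u i ^ 2 - ∑ i ∈ s, ∑ j ∈ s with i ≠ j ∧ K.ecol i j = .gray, u i * u j :=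
        sub_nonneg.2 <| s.sum_sum_filter_mul_le_mul_sum_sq
          (fun i j h => ⟨h.1.symm, K.ecol_symm i j ▸ h.2⟩) hdeg u
    _ = ∑ i ∈ s, ∑ j ∈ s, ((if i = j then w * u i ^ 2 else 0)
      - (if i ≠ j ∧ K.ecol i j = .gray then u i * u j else 0)) := by
        simp only [sum_sub_distrib, sum_ite_eq, sum_ite_mem, inter_self, sum_filter, mul_sum]
    _ ≤ _ := sum_le_sum fun i hi => sum_le_sum fun j hj => hterm i hi j hj

theorem sum_sum_mul_colorMatrix_nonneg_of_black (hw : -1 ≤ w)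
    (hs : ∀ i ∈ s, K.vcol i = true) (hs_pair : ∀ i ∈ s, ∀ j ∈ s, i ≠ j → K.ecol i j ≠ .black)
    (hcard : (#s : ℝ) ≤ k + 1) (hu : 0 ≤ u) :
    0 ≤ ∑ i ∈ s, ∑ j ∈ s, u i * K.colorMatrix w (-1) k i j * u j := by
  have hterm : ∀ i ∈ s, ∀ j ∈ s, (if i = j then (k + 1) * u i ^ 2 else 0) - u i * u j
      ≤ u i * K.colorMatrix w (-1) k i j * u j := by
    intro i hi j hj
    rcases eq_or_ne i j with rfl | hij
    · simp only [colorMatrix_apply_self, hs i hi]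
      exact le_of_eq (by simp; ring)
    · rw [colorMatrix_apply_of_ne hij, if_neg hij, zero_sub]
      have huij := mul_nonneg (hu i) (hu j)
      have hwt : -1 ≤ (K.ecol i j).weight w (-1) k := by
        cases he : K.ecol i j
        · exact hw
        · exact le_rfl
        · exact absurd he (hs_pair i hi j hj hij)
      nlinarith
  have hCS := sq_sum_le_card_mul_sum_sq (s := s) (f := u)
  have hsq : 0 ≤ ∑ i ∈ s, u i ^ 2 := sum_nonneg fun i _ => sq_nonneg (u i)
  calc (0 : ℝ) ≤ (k + 1) * ∑ i ∈ s, u i ^ 2 - (∑ i ∈ s, u i) ^ 2 := by nlinarith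
    _ = ∑ i ∈ s, ∑ j ∈ s, ((if i = j then (k + 1) * u i ^ 2 else 0) - u i * u j) := by
        simp only [sum_sub_distrib, sum_ite_eq, sum_ite_mem, inter_self, ← mul_sum, ← sum_mul, sq]
    _ ≤ _ := sum_le_sum fun i hi => sum_le_sum fun j hj => hterm i hi j hj

theorem sum_sum_mul_colorMatrix_nonneg_of_black_edges {g : ℝ} (hk : 0 ≤ k)
    (hst : ∀ i ∈ s, ∀ j ∈ t, i ≠ j ∧ K.ecol i j = .black) (hu : 0 ≤ u) :
    0 ≤ ∑ i ∈ s, ∑ j ∈ t, u i * K.colorMatrix w g k i j * u j :=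
  sum_nonneg fun i hi => sum_nonneg fun j hj => by
    rw [colorMatrix_apply_of_ne (hst i hi j hj).1, (hst i hi j hj).2]
    exact mul_nonneg (mul_nonneg (hu i) hk) (hu j)

end Blocks

section Homomorphisms

theorem AdmitsEdge.symm {x y : Fin K.n} : K.AdmitsEdge x y → K.AdmitsEdge y x := by
  rintro (⟨rfl, h⟩ | ⟨hne, h⟩)
  · exact .inl ⟨rfl, h⟩
  · exact .inr ⟨hne.symm, K.ecol_symm x y ▸ h⟩

theorem AdmitsNonEdge.symm {x y : Fin K.n} : K.AdmitsNonEdge x y → K.AdmitsNonEdge y x := by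
  rintro (⟨rfl, h⟩ | ⟨hne, h⟩)
  · exact .inl ⟨rfl, h⟩
  · exact .inr ⟨hne.symm, K.ecol_symm x y ▸ h⟩

variable {a b : ℕ}

theorem chom_cliquePlusEmpty_of (f : Fin a → Fin K.n) (g : Fin b → Fin K.n)
    (hf : ∀ i i', i ≠ i' → K.AdmitsEdge (f i) (f i'))
    (hg : ∀ m m', m ≠ m' → K.AdmitsNonEdge (g m) (g m'))
    (hfg : ∀ i m, K.AdmitsNonEdge (f i) (g m)) : CHom (cliquePlusEmpty a b) K := by
  refine ⟨Sum.elim f g, ?_, ?_⟩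
  · rintro (i | m) (i' | m') ⟨hne, hi, hi'⟩ <;> simp_all
    exact hf i i' hne
  · rintro (i | m) (i' | m') hne hadj
    · exact absurd ⟨hne, rfl, rfl⟩ hadj
    · exact hfg i m'
    · exact (hfg i' m).symm
    · exact hg m m' (by simpa using hne)

variable (h : ¬ CHom (cliquePlusEmpty a b) K)
include h

theorem ecol_eq_black_of_not_chom {x y : Fin K.n} (hx : K.vcol x = false)
    (hy : K.vcol y = true) : K.ecol x y = .black := by
  by_contra hxy
  have hne : y ≠ x := by rintro rfl; simp_all
  exact h <| chom_cliquePlusEmpty_of (fun _ => y) (fun _ => x) (fun _ _ _ => .inl ⟨rfl, hy⟩)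
    (fun _ _ _ => .inl ⟨rfl, hx⟩) fun _ _ => .inr ⟨hne, K.ecol_symm x y ▸ hxy⟩

theorem card_le_of_not_chom {s : Finset (Fin K.n)} (hs : ∀ x ∈ s, K.vcol x = true)
    (hs_pair : ∀ x ∈ s, ∀ y ∈ s, x ≠ y → K.ecol x y ≠ .black) : #s ≤ b := by
  by_contra! hb
  set e : Fin (b + 1) → Fin K.n := fun m => s.orderEmbOfFin rfl (Fin.castLE hb m)
  have he_mem : ∀ m, e m ∈ s := fun m => s.orderEmbOfFin_mem rfl _
  have he_ne : ∀ {m m'}, m ≠ m' → e m ≠ e m' := fun hm he =>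
    hm (Fin.castLE_injective hb ((s.orderEmbOfFin rfl).injective he))
  refine h <| chom_cliquePlusEmpty_of (fun _ => e 0) (fun m => e m.succ)
    (fun _ _ _ => .inl ⟨rfl, hs _ (he_mem 0)⟩) (fun m m' hm => ?_) fun _ m => ?_
  · have hne := he_ne ((Fin.succ_injective _).ne hm)
    exact .inr ⟨hne, hs_pair _ (he_mem _) _ (he_mem _) hne⟩
  · have hne := he_ne (Fin.succ_ne_zero m).symm
    exact .inr ⟨hne, hs_pair _ (he_mem _) _ (he_mem _) hne⟩

theorem card_add_two_le_of_not_chom {x : Fin K.n} (hx : K.vcol x = false)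
    {s : Finset (Fin K.n)} (hs : ∀ y ∈ s, y ≠ x ∧ K.ecol x y = .gray)
    (hs_pair : ∀ y ∈ s, ∀ z ∈ s, y ≠ z → K.ecol y z ≠ .white) : #s + 2 ≤ a := by
  by_contra! ha
  have hxx : K.AdmitsNonEdge x x := .inl ⟨rfl, hx⟩
  rcases a with _ | c
  · exact h <| chom_cliquePlusEmpty_of (fun _ => x) (fun _ => x) (fun i => i.elim0)
      (fun _ _ _ => hxx) fun i => i.elim0
  have hc : c ≤ #s := by omega
  set e : Fin c → Fin K.n := fun m => s.orderEmbOfFin rfl (Fin.castLE hc m)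
  have he_mem : ∀ m, e m ∈ s := fun m => s.orderEmbOfFin_mem rfl _
  have he_ne : ∀ {m m'}, m ≠ m' → e m ≠ e m' := fun hm he =>
    hm (Fin.castLE_injective hc ((s.orderEmbOfFin rfl).injective he))
  have hxe : ∀ m, K.AdmitsEdge x (e m) := fun m =>
    .inr ⟨(hs _ (he_mem m)).1.symm, by simp [(hs _ (he_mem m)).2]⟩
  have hex : ∀ m, K.AdmitsNonEdge (e m) x := fun m =>
    .inr ⟨(hs _ (he_mem m)).1, by rw [K.ecol_symm, (hs _ (he_mem m)).2]; simp⟩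
  refine h <| chom_cliquePlusEmpty_of (Fin.cons x e) (fun _ => x) ?_ (fun _ _ _ => hxx) ?_
  · intro i i' hi
    cases i using Fin.cases <;> cases i' using Fin.cases
    · exact absurd rfl hi
    · simpa using hxe _
    · simpa using (hxe _).symm
    · have hne := he_ne ((Fin.succ_injective _).ne_iff.1 hi)
      simpa using .inr ⟨hne, hs_pair _ (he_mem _) _ (he_mem _) hne⟩
  · intro i _
    cases i using Fin.cases
    · exact hxx
    · simpa using hex _

theorem quadForm_nonneg_of_not_chom_of_posOnSupportDiffs (ha : 1 ≤ a) (hb : 1 ≤ b)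
    {u : Fin K.n → ℝ} (hu : 0 ≤ u)
    (hpos : (K.colorMatrix (a - 2) (-1) (b - 1)).PosOnSupportDiffs u) :
    0 ≤ u ⬝ᵥ K.colorMatrix (a - 2) (-1) (b - 1) *ᵥ u := by
  set S : Finset (Fin K.n) := {i | u i ≠ 0}
  set W := S.filter (K.vcol · = false)
  set B := S.filter (¬ K.vcol · = false)
  have hW : ∀ i ∈ W, u i ≠ 0 ∧ K.vcol i = false := fun i hi => by simpa [W, S] using hi
  have hB : ∀ i ∈ B, u i ≠ 0 ∧ K.vcol i = true := fun i hi => by simpa [B, S] using hi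
  have hW_pair : ∀ i ∈ W, ∀ j ∈ W, i ≠ j → K.ecol i j ≠ .white := fun i hi j hj hij he =>
    (hpos i j hij (hW i hi).1 (hW j hj).1).ne'
      (colorMatrix_add_eq_two_mul_of_white hij (hW i hi).2 (hW j hj).2 he)
  have hB_pair : ∀ i ∈ B, ∀ j ∈ B, i ≠ j → K.ecol i j ≠ .black := fun i hi j hj hij he =>
    (hpos i j hij (hB i hi).1 (hB j hj).1).ne'
      (colorMatrix_add_eq_two_mul_of_black hij (hB i hi).2 (hB j hj).2 he)
  have hWB : ∀ i ∈ W, ∀ j ∈ B, i ≠ j ∧ K.ecol i j = .black := fun i hi j hj =>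
    ⟨by rintro rfl; simpa [(hB i hj).2] using (hW i hi).2,
      ecol_eq_black_of_not_chom h (hW i hi).2 (hB j hj).2⟩
  have hdeg : ∀ i ∈ W, (#{j ∈ W | i ≠ j ∧ K.ecol i j = .gray} : ℝ) ≤ a - 2 := by
    intro i hi
    rw [le_sub_iff_add_le]
    exact_mod_cast card_add_two_le_of_not_chom h (hW i hi).2
      (fun j hj => by simp at hj; exact ⟨Ne.symm hj.2.1, hj.2.2⟩)
      (fun j hj l hl => hW_pair j (mem_filter.1 hj).1 l (mem_filter.1 hl).1)
  have hcard : (#B : ℝ) ≤ (b - 1 : ℝ) + 1 := by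
    simpa using card_le_of_not_chom h (fun i hi => (hB i hi).2) hB_pair
  have hsplit : ∀ f : Fin K.n → ℝ, ∑ i ∈ S, f i = ∑ i ∈ W, f i + ∑ i ∈ B, f i :=
    fun f => (sum_filter_add_sum_filter_not S _ f).symm
  have ha' : (1 : ℝ) ≤ a := by exact_mod_cast ha
  have hb' : (0 : ℝ) ≤ b - 1 := by simpa using hb
  rw [dotProduct_mulVec_self_eq_sum_sum _ (s := S) fun i hi => by simpa [S] using hi]
  simp only [hsplit, sum_add_distrib]
  have hWW := sum_sum_mul_colorMatrix_nonneg_of_white hb' (fun i hi => (hW i hi).2)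
    hW_pair hdeg hu
  have hBB := sum_sum_mul_colorMatrix_nonneg_of_black (w := a - 2) (by linarith)
    (fun i hi => (hB i hi).2) hB_pair hcard hu
  have hWB' := sum_sum_mul_colorMatrix_nonneg_of_black_edges (w := a - 2) (g := -1) hb' hWB hu
  have hBW' := sum_sum_mul_colorMatrix_nonneg_of_black_edges (w := a - 2) (g := -1) hb'
    (fun j hj i hi => ⟨(hWB i hi j hj).1.symm, K.ecol_symm i j ▸ (hWB i hi j hj).2⟩) hu
  linarith

theorem quadForm_nonneg_of_not_chom (ha : 1 ≤ a) (hb : 1 ≤ b) {u : Fin K.n → ℝ}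
    (hu : 0 ≤ u) : 0 ≤ u ⬝ᵥ K.colorMatrix (a - 2) (-1) (b - 1) *ᵥ u :=
  (colorMatrix_isSymm _ _ _).quadForm_nonneg_of_posOnSupportDiffs
    (fun _ hv hpos => quadForm_nonneg_of_not_chom_of_posOnSupportDiffs h ha hb hv hpos) hu

end Homomorphisms

end CRG

theorem fK_lower_bound_KaEb (a b : ℕ) (ha : 2 ≤ a) (hb : 1 ≤ b) (K : CRG)
    (h : ¬ CHom (cliquePlusEmpty a b) K) :
    1 / ((a : ℝ) + (b : ℝ) - 1) ≤ K.fK (((a : ℝ) - 1) / ((a : ℝ) + (b : ℝ) - 1)) := by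
  set r : ℝ := a + b - 1
  set p : ℝ := (a - 1) / r
  have hr : 0 < r := by
    have : (2 : ℝ) ≤ a := by exact_mod_cast ha
    have : (1 : ℝ) ≤ b := by exact_mod_cast hb
    linarith
  have hrp : r * p = a - 1 := mul_div_cancel₀ _ hr.ne'
  have hA : ∀ i j, K.colorMatrix (a - 2) (-1) (b - 1) i j = r * K.M p i j + -1 := fun i j => by
    rw [K.M_eq_colorMatrix]
    exact K.colorMatrix_apply_affine r (-1) (by linarith) (by ring) (by linear_combination hrp) i j
  have hQ := K.quadForm_nonneg_of_not_chom h (by omega) hb (u := 1) fun _ => zero_le_one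
  rw [dotProduct_mulVec_self_eq_sum_sum _ (s := univ) (by simp)] at hQ
  simp only [Pi.one_apply, one_mul, mul_one, hA, sum_add_distrib, ← mul_sum, sum_const,
    card_univ, Fintype.card_fin, nsmul_eq_mul] at hQ
  have hn : (0 : ℝ) < K.n := by exact_mod_cast K.npos
  have hsum : (K.n : ℝ) ^ 2 ≤ r * ∑ i, ∑ j, K.M p i j := by linarith
  rw [CRG.fK_eq_sum_M, div_le_div_iff₀ hr (by positivity)]
  linarith
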